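/- With hypotheses as above, the set U = {y ∈ V : x □ y = x ∘ y for all x ∈ V} is nonzero (contains a nonzero element), and U is a subgroup of both (V, ∘) and (V, □). -/

import Mathlib

/-!
The law `x □ y = κ_y(x) + y` together with associativity gives `κ_{y □ z} = κ_z ∘ κ_y`, so `(V, □)`
is a group of order `p ^ d` acting linearly on `V` through `κ`. A `p`-group acting on a set of size
divisible by `p` with one fixed point (here `0`) has another one, which is a nonzero common fixed
vector of all `κ_x`. By commutativity of `□`, `x □ y = x + y` says exactly `κ_x(y) = y`, so `U` is
the common fixed space of the `κ_x`: a subspace of `V` on which `□` coincides with `+`, hence also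
a subgroup of `(V, □)`.
-/

def BoxGroup (V : Type*) : Type _ := V

section BoxLaw

variable {R V : Type*} [Semiring R] [AddCommGroup V] [Module R V]
  {box : V → V → V} {κ : V → V ≃ₗ[R] V}

theorem kappa_zero_apply (hzero : ∀ x : V, box x 0 = x) (hκ : ∀ x y : V, box x y = κ y x + y)
    (x : V) : κ 0 x = x := by
  simpa only [hκ, add_zero] using hzero x

theorem kappa_box_apply (hassoc : ∀ x y z : V, box (box x y) z = box x (box y z))
    (hκ : ∀ x y : V, box x y = κ y x + y) (y z x : V) : κ (box y z) x = κ z (κ y x) := by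
  have h := hassoc x y z
  rw [hκ x y, hκ _ z, map_add, hκ x, hκ y z, add_assoc] at h
  rw [hκ y z]
  exact (add_right_cancel h).symm

theorem zero_box (hκ : ∀ x y : V, box x y = κ y x + y) (x : V) : box 0 x = x := by
  rw [hκ, map_zero, zero_add]

theorem exists_box_eq_zero (hκ : ∀ x y : V, box x y = κ y x + y) (g : V) :
    ∃ w, box w g = 0 := by
  obtain ⟨w, hw⟩ := ((κ g).toEquiv.trans (Equiv.addRight g)).surjective 0
  exact ⟨w, (hκ w g).trans hw⟩

theorem box_eq_add_iff_kappa_apply_eq (hcomm : ∀ x y : V, box x y = box y x)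
    (hκ : ∀ x y : V, box x y = κ y x + y) {x y : V} : box x y = x + y ↔ κ x y = y := by
  rw [hcomm, hκ, add_comm x y, add_left_inj]

theorem setOf_forall_box_eq_add_eq_iInf_eqLocus (hcomm : ∀ x y : V, box x y = box y x)
    (hκ : ∀ x y : V, box x y = κ y x + y) :
    {y : V | ∀ x : V, box x y = x + y} =
      ↑(⨅ x : V, LinearMap.eqLocus (κ x : V →ₗ[R] V) LinearMap.id) := by
  ext y
  simp only [Set.mem_ofPred_eq, SetLike.mem_coe, Submodule.mem_iInf, LinearMap.mem_eqLocus,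
    LinearEquiv.coe_coe, LinearMap.id_apply, box_eq_add_iff_kappa_apply_eq hcomm hκ]

noncomputable abbrev boxGroup (hassoc : ∀ x y z : V, box (box x y) z = box x (box y z))
    (hκ : ∀ x y : V, box x y = κ y x + y) : Group (BoxGroup V) :=
  letI : Mul (BoxGroup V) := ⟨box⟩
  letI : One (BoxGroup V) := ⟨(0 : V)⟩
  letI : Inv (BoxGroup V) := ⟨fun g => (exists_box_eq_zero hκ g).choose⟩
  Group.ofLeftAxioms hassoc (zero_box (V := V) hκ)
    (fun g => (exists_box_eq_zero hκ g).choose_spec)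

end BoxLaw

theorem exists_ne_zero_forall_kappa_apply_eq (p : ℕ) [Fact p.Prime] {V : Type*} [AddCommGroup V]
    [Module (ZMod p) V] [Finite V] [Nontrivial V] {box : V → V → V} {κ : V → V ≃ₗ[ZMod p] V}
    (hcomm : ∀ x y : V, box x y = box y x)
    (hassoc : ∀ x y z : V, box (box x y) z = box x (box y z))
    (hzero : ∀ x : V, box x 0 = x) (hκ : ∀ x y : V, box x y = κ y x + y) :
    ∃ y : V, y ≠ 0 ∧ ∀ x : V, κ x y = y := by
  let _ := boxGroup hassoc hκ
  let _ : MulAction (BoxGroup V) V :=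
    { smul g x := κ g x
      one_smul := kappa_zero_apply hzero hκ
      mul_smul g h x := (congrArg (κ · x) (hcomm g h)).trans (kappa_box_apply hassoc hκ h g x) }
  have hcard : Nat.card V = p ^ Module.finrank (ZMod p) V := by
    rw [Module.natCard_eq_pow_finrank (K := ZMod p), Nat.card_zmod]
  have hG : IsPGroup p (BoxGroup V) := .of_card hcard
  have hdvd : p ∣ Nat.card V := hcard ▸ dvd_pow_self p (Module.finrank_pos (R := ZMod p)).ne'
  obtain ⟨y, hy, h0y⟩ := hG.exists_fixed_point_of_prime_dvd_card_of_fixed_point V hdvd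
    (a := 0) fun g => map_zero (κ g)
  exact ⟨y, h0y.symm, hy⟩

/-- With hypotheses as in the previous statements, the set
`U = {y ∈ V : x □ y = x ∘ y for all x ∈ V}` contains a nonzero element, and `U` is a
subgroup of both `(V, ∘)` and `(V, □)`. -/
theorem U_nonzero_and_subgroup
    (p : ℕ) [Fact p.Prime]
    (V : Type*) [AddCommGroup V] [Module (ZMod p) V] [Finite V] [Nontrivial V]
    (box : V → V → V)
    (hcomm : ∀ x y : V, box x y = box y x)
    (hassoc : ∀ x y z : V, box (box x y) z = box x (box y z))
    (hzero : ∀ x : V, box x 0 = x)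
    (κ : V → V ≃ₗ[ZMod p] V)
    (hκ : ∀ x y : V, box x y = κ y x + y) :
    -- U contains a nonzero element
    (∃ y : V, y ≠ 0 ∧ y ∈ {y : V | ∀ x : V, box x y = x + y}) ∧
    -- U is a subgroup of (V, ∘)
    (∃ H : AddSubgroup V, (H : Set V) = {y : V | ∀ x : V, box x y = x + y}) ∧
    -- U is a subgroup of (V, □)
    ((0 : V) ∈ {y : V | ∀ x : V, box x y = x + y} ∧
      (∀ u ∈ {y : V | ∀ x : V, box x y = x + y},
        ∀ v ∈ {y : V | ∀ x : V, box x y = x + y},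
          box u v ∈ {y : V | ∀ x : V, box x y = x + y}) ∧
      (∀ u ∈ {y : V | ∀ x : V, box x y = x + y},
        ∃ v ∈ {y : V | ∀ x : V, box x y = x + y}, box u v = 0)) := by
  obtain ⟨y, hy0, hy⟩ := exists_ne_zero_forall_kappa_apply_eq p hcomm hassoc hzero hκ
  have hU := setOf_forall_box_eq_add_eq_iInf_eqLocus hcomm hκ
  set U := ⨅ x : V, LinearMap.eqLocus (κ x : V →ₗ[ZMod p] V) LinearMap.id
  have mem_U (y : V) : (∀ x : V, box x y = x + y) ↔ y ∈ U := Set.ext_iff.mp hU y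
  have hnegU {u : V} (hu : ∀ x : V, box x u = x + u) : ∀ x : V, box x (-u) = x + -u :=
    (mem_U _).mpr <| U.neg_mem <| (mem_U u).mp hu
  refine ⟨⟨y, hy0, (mem_U y).mpr <| Submodule.mem_iInf _ |>.mpr hy⟩, ⟨U.toAddSubgroup, hU.symm⟩,
    (mem_U 0).mpr U.zero_mem, fun u hu v hv => ?_, fun u hu => ⟨-u, hnegU hu, ?_⟩⟩
  · rw [Set.mem_ofPred_eq, hv u, mem_U]
    exact U.add_mem ((mem_U u).mp hu) ((mem_U v).mp hv)
  · rw [hnegU hu u, add_neg_cancel]
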